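/- Let n = a + b, let θ be a word of length b and π a word of length a on complementary subsets of [n], and let σ ∈ S(θ,π). With t_i = m_i − d_i(π) and m_i = maj(σ_i) − maj(σ_{i+1}) from the insertion construction, one has maj(σ) = maj(θ) + maj(π) + Σ_{i=1}^{a} t_i. -/

import Mathlib

open Polynomial

/-- The word (1, 2, ..., n) as a list of integers. -/
def W (n : ℕ) : List ℤ := (List.range n).map (fun i => (i : ℤ) + 1)

/-- Descent set of a word: 1-based indices i ∈ {1,...,m-1} with w(i) > w(i+1). -/
def descSet (w : List ℤ) : Finset ℕ :=
  (Finset.Icc 1 (w.length - 1)).filter (fun i => w.getD (i - 1) 0 > w.getD i 0)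

/-- Major index of a word: the sum of its descents. -/
def maj (w : List ℤ) : ℕ := ∑ i ∈ descSet w, i

/-- `dstat w k` is the number of descents of `w` that are ≥ k. -/
def dstat (w : List ℤ) (k : ℕ) : ℕ := ((descSet w).filter (fun i => k ≤ i)).card

/-- Major increment: the change in major index when `r` is inserted into `w`
at (1-based) position `k`. -/
def mi (w : List ℤ) (k : ℕ) (r : ℤ) : ℤ := (maj (w.insertIdx (k - 1) r) : ℤ) - (maj w : ℤ)

/-- The q-factorial [m]_q! = ∏_{i=1}^m (1 + q + ... + q^{i-1}), as a polynomial in q. -/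
noncomputable def qFact (m : ℕ) : Polynomial ℚ :=
  ∏ i ∈ Finset.range m, ∑ j ∈ Finset.range (i + 1), (X : Polynomial ℚ) ^ j

/-- The q-binomial coefficient [n choose a]_q = [n]_q!/([a]_q!·[n−a]_q!). -/
noncomputable def qBinom (n a : ℕ) : Polynomial ℚ := qFact n / (qFact a * qFact (n - a))

/-- The set of all shuffles of two words `θ` and `π` (words containing `θ` and `π`
as complementary subwords). -/
def shuffles (θ π : List ℤ) : Finset (List ℤ) :=
  (θ ++ π).permutations.toFinset.filter (fun σ => θ.Sublist σ ∧ π.Sublist σ)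

/-- σ is a shuffle of θ and π: it contains θ and π as complementary subwords. -/
def IsShuffle (θ π σ : List ℤ) : Prop := θ.Sublist σ ∧ π.Sublist σ ∧ σ.Perm (θ ++ π)

/-- Insertion construction: `subw θ π σ i` is the subword σᵢ of σ consisting of the
letters of θ together with π(i),...,π(a) (indices 1-based); `subw θ π σ (a+1) = θ`. -/
def subw (θ π σ : List ℤ) (i : ℕ) : List ℤ :=
  σ.filter (fun x => decide (x ∈ θ ∨ x ∈ π.drop (i - 1)))

/-- `kpos θ π σ i` is the (1-based) position kᵢ at which π(i) is inserted into σᵢ₊₁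
to form σᵢ, i.e. the position of the letter π(i) in σᵢ. -/
def kpos (θ π σ : List ℤ) (i : ℕ) : ℕ :=
  (subw θ π σ i).idxOf (π.getD (i - 1) 0) + 1

/-- `mstat θ π σ i` is mᵢ = maj(σᵢ) - maj(σᵢ₊₁), the increase in major index induced
by the insertion of π(i). -/
def mstat (θ π σ : List ℤ) (i : ℕ) : ℤ :=
  (maj (subw θ π σ i) : ℤ) - (maj (subw θ π σ (i + 1)) : ℤ)

/-!
Removing the letters π(1), ..., π(a) one at a time turns σ = σ₁ into σ_{a+1} = θ, so the
increments mᵢ telescope to maj σ - maj θ. Each descent j of π is counted by dᵢ(π) for exactly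
the j indices i = 1, ..., j, so Σᵢ dᵢ(π) = maj π.
-/

open Finset

theorem W_nodup (n : ℕ) : (W n).Nodup := by
  refine List.Nodup.map (add_left_injective 1) ?_
  -- `W` elaborates `List.range n` into `List ℤ` through the list monad.
  change (List.flatMap (pure ∘ Nat.cast) (List.range n)).Nodup
  rw [List.flatMap_pure_eq_map]
  exact List.nodup_range.map Nat.cast_injective

theorem List.filter_mem_eq_of_sublist_of_perm_append {α : Type*} [DecidableEq α]
    {l₁ l₂ σ : List α} (h₁ : l₁.Sublist σ) (hp : σ.Perm (l₁ ++ l₂)) (hd : l₁.Disjoint l₂) :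
    σ.filter (· ∈ l₁) = l₁ := by
  have hsub : l₁.Sublist (σ.filter (· ∈ l₁)) := by
    simpa [List.filter_eq_self.mpr fun x hx => decide_eq_true hx] using h₁.filter (· ∈ l₁)
  refine (hsub.eq_of_length ?_).symm
  have hl₂ : l₂.countP (· ∈ l₁) = 0 :=
    List.countP_eq_zero.mpr fun x hx h => hd (by simpa using h) hx
  rw [← List.countP_eq_length_filter, hp.countP_eq, List.countP_append, hl₂,
    List.countP_eq_length.mpr fun x hx => decide_eq_true hx]
  rfl

theorem sum_dstat_eq_maj (w : List ℤ) : ∑ i ∈ Icc 1 w.length, dstat w i = maj w := by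
  simp only [dstat, maj, card_filter]
  rw [sum_comm]
  refine sum_congr rfl fun j hj => ?_
  have hj_le : j ≤ w.length := by
    simp only [descSet, mem_filter, mem_Icc] at hj
    omega
  rw [← card_filter, show (Icc 1 w.length).filter (· ≤ j) = Icc 1 j by ext; simp only [mem_filter, mem_Icc]; omega,
    Nat.card_Icc, Nat.add_sub_cancel]

section InsertionConstruction

variable {θ π σ : List ℤ}

theorem subw_one (hp : σ.Perm (θ ++ π)) : subw θ π σ 1 = σ := by
  refine List.filter_eq_self.mpr fun x hx => ?_
  simpa using List.mem_append.mp (hp.mem_iff.mp hx)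

theorem subw_of_length_lt {i : ℕ} (hi : π.length < i) (hθ : θ.Sublist σ)
    (hp : σ.Perm (θ ++ π)) (hd : θ.Disjoint π) : subw θ π σ i = θ := by
  have hdrop : π.drop (i - 1) = [] := List.drop_eq_nil_of_le (by omega)
  simpa [subw, hdrop] using List.filter_mem_eq_of_sublist_of_perm_append hθ hp hd

theorem sum_mstat (a : ℕ) :
    ∑ i ∈ Icc 1 a, mstat θ π σ i = (maj (subw θ π σ 1) : ℤ) - maj (subw θ π σ (a + 1)) := by
  induction a with
  | zero => simp
  | succ a ih =>
    rw [sum_Icc_succ_top (by omega), ih, mstat]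
    ring

end InsertionConstruction

theorem maj_decomposition_general (n a : ℕ) (θ π : List ℤ)
    (hπ : π.length = a) (hperm : (θ ++ π).Perm (W n))
    (σ : List ℤ) (hσ : IsShuffle θ π σ) :
    (maj σ : ℤ) = (maj θ : ℤ) + (maj π : ℤ) +
      ∑ i ∈ Finset.Icc 1 a, (mstat θ π σ i - (dstat π i : ℤ)) := by
  obtain ⟨hθ, -, hp⟩ := hσ
  have hd : θ.Disjoint π := List.disjoint_of_nodup_append (hperm.nodup_iff.mpr (W_nodup n))
  have hm : ∑ i ∈ Icc 1 a, mstat θ π σ i = (maj σ : ℤ) - maj θ := by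
    rw [sum_mstat, subw_one hp, subw_of_length_lt (by omega) hθ hp hd]
  have hdstat : ∑ i ∈ Icc 1 a, (dstat π i : ℤ) = maj π := by
    rw [← hπ, ← Nat.cast_sum, sum_dstat_eq_maj]
  rw [sum_sub_distrib, hm, hdstat]
  ring

/-- Property (5): maj(σ) = maj(θ) + maj(π) + Σᵢ tᵢ, where tᵢ = mᵢ - dᵢ(π). -/
theorem maj_decomposition (n a b : ℕ) (hn : n = a + b) (θ π : List ℤ)
    (hθ : θ.length = b) (hπ : π.length = a) (hperm : (θ ++ π).Perm (W n))
    (σ : List ℤ) (hσ : IsShuffle θ π σ) :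
    (maj σ : ℤ) = (maj θ : ℤ) + (maj π : ℤ) +
      ∑ i ∈ Finset.Icc 1 a, (mstat θ π σ i - (dstat π i : ℤ)) :=
  maj_decomposition_general n a θ π hπ hperm σ hσ
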